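/- Strong bilateral semantic harmony: for all sets Γ, Δ of formulas, every base B, every formula χ, and each sign * ∈ {+,−}: Γ;Δ ⊩*_B χ if and only if (Δ)^D;(Γ)^D ⊩*ᴰ_{(B)^D} (χ)^D, where (+)^D = − and (−)^D = +. -/

import Mathlib

/-- Signs: `pos` for proof/assertion, `neg` for refutation/rejection. -/
inductive Sign where
  | pos
  | neg
deriving DecidableEq

/-- The dual of a sign. -/
def Sign.dual : Sign → Sign
  | .pos => .neg
  | .neg => .pos

/-- Formulas of the bilateral logic 2Int. -/
inductive Form where
  | atom : ℕ → Form
  | bot : Form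
  | top : Form
  | and : Form → Form → Form
  | or : Form → Form → Form
  | imp : Form → Form → Form
  | coimp : Form → Form → Form
deriving DecidableEq

/-- A premise of an atomic rule: the sign required (proof or refutation), the premise atom,
and the sets of dischargeable atomic proof assumptions and refutation assumptions. -/
structure Premise where
  sign : Sign
  concl : ℕ
  dischargePf : Set ℕ
  dischargeRf : Set ℕ

/-- An atomic rule: a list of premises, a marking as proof (`pos`) or refutation (`neg`) rule,
and an atomic conclusion. -/
structure AtomicRule where
  prems : List Premise
  sign : Sign
  concl : ℕ

/-- A bilateral atomic system (base) is a set of atomic rules. -/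
abbrev Base := Set AtomicRule

/-- `AtDeriv B s Γ Δ p` formalizes `Γ;Δ ⊢^s_B p`: there is a deduction in `B` of the atom `p`
whose open atomic proof assumptions are contained in `Γ` and open atomic refutation
assumptions in `Δ`, consisting of a single assumption of sign `s` or ending with a rule of
sign `s`. -/
inductive AtDeriv (B : Base) : Sign → Set ℕ → Set ℕ → ℕ → Prop
  | hypPos {Γ Δ : Set ℕ} {p : ℕ} : p ∈ Γ → AtDeriv B .pos Γ Δ p
  | hypNeg {Γ Δ : Set ℕ} {p : ℕ} : p ∈ Δ → AtDeriv B .neg Γ Δ p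
  | app {Γ Δ : Set ℕ} {R : AtomicRule} (hR : R ∈ B)
      (h : ∀ pr ∈ R.prems,
        AtDeriv B pr.sign (Γ ∪ pr.dischargePf) (Δ ∪ pr.dischargeRf) pr.concl) :
      AtDeriv B R.sign Γ Δ R.concl

/-- Bilateral validity (support) `⊩^s_B φ`, by recursion on the formula. -/
def Supp : Form → Base → Sign → Prop
  | .atom p, B, s => AtDeriv B s ∅ ∅ p
  | .bot, B, .pos => ∀ p : ℕ, AtDeriv B .pos ∅ ∅ p ∧ AtDeriv B .neg ∅ ∅ p
  | .bot, _, .neg => True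
  | .top, _, .pos => True
  | .top, B, .neg => ∀ p : ℕ, AtDeriv B .pos ∅ ∅ p ∧ AtDeriv B .neg ∅ ∅ p
  | .and φ ψ, B, .pos => Supp φ B .pos ∧ Supp ψ B .pos
  | .and φ ψ, B, .neg => ∀ C : Base, B ⊆ C → ∀ p : ℕ,
      (((∀ D : Base, C ⊆ D → Supp φ D .neg → AtDeriv D .pos ∅ ∅ p) ∧
        (∀ D : Base, C ⊆ D → Supp ψ D .neg → AtDeriv D .pos ∅ ∅ p)) →
        AtDeriv C .pos ∅ ∅ p) ∧
      (((∀ D : Base, C ⊆ D → Supp φ D .neg → AtDeriv D .neg ∅ ∅ p) ∧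
        (∀ D : Base, C ⊆ D → Supp ψ D .neg → AtDeriv D .neg ∅ ∅ p)) →
        AtDeriv C .neg ∅ ∅ p)
  | .or φ ψ, B, .pos => ∀ C : Base, B ⊆ C → ∀ p : ℕ,
      (((∀ D : Base, C ⊆ D → Supp φ D .pos → AtDeriv D .pos ∅ ∅ p) ∧
        (∀ D : Base, C ⊆ D → Supp ψ D .pos → AtDeriv D .pos ∅ ∅ p)) →
        AtDeriv C .pos ∅ ∅ p) ∧
      (((∀ D : Base, C ⊆ D → Supp φ D .pos → AtDeriv D .neg ∅ ∅ p) ∧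
        (∀ D : Base, C ⊆ D → Supp ψ D .pos → AtDeriv D .neg ∅ ∅ p)) →
        AtDeriv C .neg ∅ ∅ p)
  | .or φ ψ, B, .neg => Supp φ B .neg ∧ Supp ψ B .neg
  | .imp φ ψ, B, .pos => ∀ C : Base, B ⊆ C → Supp φ C .pos → Supp ψ C .pos
  | .imp φ ψ, B, .neg => Supp φ B .pos ∧ Supp ψ B .neg
  | .coimp φ ψ, B, .pos => Supp φ B .pos ∧ Supp ψ B .neg
  | .coimp φ ψ, B, .neg => ∀ C : Base, B ⊆ C → Supp ψ C .neg → Supp φ C .neg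

open Classical in
/-- `Cons B Γ Δ s χ` formalizes `Γ;Δ ⊩^s_B χ`. -/
def Cons (B : Base) (Γ Δ : Set Form) (s : Sign) (χ : Form) : Prop :=
  if Γ = ∅ ∧ Δ = ∅ then Supp χ B s
  else ∀ C : Base, B ⊆ C →
    (∀ φ ∈ Γ, Supp φ C .pos) → (∀ ψ ∈ Δ, Supp ψ C .neg) → Supp χ C s

/-- Dual of a premise. -/
def Premise.dual (pr : Premise) : Premise :=
  ⟨pr.sign.dual, pr.concl, pr.dischargeRf, pr.dischargePf⟩

/-- Dual of an atomic rule. -/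
def AtomicRule.dual (R : AtomicRule) : AtomicRule :=
  ⟨R.prems.map Premise.dual, R.sign.dual, R.concl⟩

/-- Dual of a base. -/
def Base.dual (B : Base) : Base := AtomicRule.dual '' B

/-- Dual of a formula. -/
def Form.dual : Form → Form
  | .atom p => .atom p
  | .bot => .top
  | .top => .bot
  | .and φ ψ => (φ.dual).or (ψ.dual)
  | .or φ ψ => (φ.dual).and (ψ.dual)
  | .imp φ ψ => (ψ.dual).coimp (φ.dual)
  | .coimp φ ψ => (ψ.dual).imp (φ.dual)

/-!
Dualising is an involution on signs, rules, bases and formulas, and it is monotone on bases, so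
it maps the extensions of `B` bijectively onto those of `B^D`. Read rule by rule, an atomic
deduction in `B` is one in `B^D` with proof and refutation exchanged. After reindexing every
extension `C ⊇ B^D` as `C^D ⊇ B`, each clause of `Supp` for `χ^D` and `s^D` becomes the clause
for `χ` and `s` up to the order of two conjuncts, which gives the duality of support by
induction on `χ`; for consequence, the two families of assumptions trade places.
-/

@[simp] lemma Sign.dual_pos : Sign.pos.dual = .neg := rfl

@[simp] lemma Sign.dual_neg : Sign.neg.dual = .pos := rfl

@[simp] lemma Sign.dual_dual (s : Sign) : s.dual.dual = s := by cases s <;> rfl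

@[simp] lemma Premise.dual_dual (pr : Premise) : pr.dual.dual = pr := by
  cases pr; simp [Premise.dual]

@[simp] lemma AtomicRule.dual_dual (R : AtomicRule) : R.dual.dual = R := by
  cases R; simp [AtomicRule.dual, Function.comp_def]

@[simp] lemma Base.dual_dual (B : Base) : B.dual.dual = B := by
  simp [Base.dual, Set.image_image]

@[simp] lemma Form.dual_dual (φ : Form) : φ.dual.dual = φ := by
  induction φ <;> simp [Form.dual, *]

lemma Base.dual_mono {B C : Base} (h : B ⊆ C) : B.dual ⊆ C.dual :=
  Set.image_mono h

lemma Base.forall_dual_subset_iff {B : Base} {P : Base → Prop} :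
    (∀ C, B.dual ⊆ C → P C) ↔ ∀ C, B ⊆ C → P C.dual := by
  refine ⟨fun h C hC => h C.dual (Base.dual_mono hC), fun h C hC => ?_⟩
  simpa using h C.dual (by simpa using Base.dual_mono hC)

lemma AtDeriv.dual {B : Base} {s : Sign} {Γ Δ : Set ℕ} {p : ℕ} (h : AtDeriv B s Γ Δ p) :
    AtDeriv B.dual s.dual Δ Γ p := by
  induction h with
  | hypPos h => exact .hypNeg h
  | hypNeg h => exact .hypPos h
  | app hR _ ih =>
    refine AtDeriv.app (R := AtomicRule.dual _) ⟨_, hR, rfl⟩ fun pr hpr => ?_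
    obtain ⟨q, hq, rfl⟩ := List.mem_map.1 hpr
    exact ih q hq

@[simp] lemma atDeriv_dual_iff {B : Base} {s : Sign} {Γ Δ : Set ℕ} {p : ℕ} :
    AtDeriv B.dual s Γ Δ p ↔ AtDeriv B s.dual Δ Γ p :=
  ⟨fun h => by simpa using h.dual, fun h => by simpa using h.dual⟩

@[simp] lemma supp_dual_iff (χ : Form) (B : Base) (s : Sign) :
    Supp χ.dual B.dual s ↔ Supp χ B s.dual := by
  induction χ generalizing B s with
  | atom p => exact atDeriv_dual_iff
  | bot | top =>
    cases s <;> simp only [Form.dual, Supp, Sign.dual_pos, Sign.dual_neg, atDeriv_dual_iff,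
      and_comm]
  | and φ ψ ihφ ihψ | or φ ψ ihφ ihψ | imp φ ψ ihφ ihψ | coimp φ ψ ihφ ihψ =>
    cases s <;> simp only [Form.dual, Supp, Sign.dual_pos, Sign.dual_neg,
      Base.forall_dual_subset_iff, atDeriv_dual_iff, ihφ, ihψ, and_comm, and_imp]

theorem strong_bilateral_semantic_harmony (Γ Δ : Set Form) (B : Base) (χ : Form) (s : Sign) :
    Cons B Γ Δ s χ ↔
      Cons (Base.dual B) (Form.dual '' Δ) (Form.dual '' Γ) (Sign.dual s) (Form.dual χ) := by
  have hempty : (Form.dual '' Δ = ∅ ∧ Form.dual '' Γ = ∅) ↔ (Γ = ∅ ∧ Δ = ∅) := by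
    simp only [Set.image_eq_empty, and_comm]
  simp only [Cons, hempty, Base.forall_dual_subset_iff, Set.forall_mem_image, supp_dual_iff,
    Sign.dual_pos, Sign.dual_neg, Sign.dual_dual]
  split_ifs
  · rfl
  · exact forall₂_congr fun _ _ => imp.swap
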